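/- arXiv:2405.08914 — 2 statements merged into one kernel-verified Lean document; each statement's English description precedes it below -/
import Mathlib

section
/- Catalyst marginal restoration (classical version): let ρ, σ be probability distributions on X and χ a distribution on X^n. Define the joint distribution η on X × X^{n-1} × {1,...,n} by η := (1/n)[ χ ⊗ δ₁ + Σ_{i=2}^n P_i(ρ^{⊗(i-1)} ⊗ χ^{(n-i)}) ⊗ δ_i ], where χ^{(n-i)} is the marginal of χ on its last n-i coordinates, δ_i is the point mass at i, and P_i is the permutation of the n coordinates of X^n that swaps coordinate 1 with coordinate i. Then the marginal of η on X^{n-1} × {1,...,n} (tracing the first X factor) equals ω := (1/n) Σ_{i=1}^n (ρ^{⊗(i-1)} ⊗ χ^{(n-i)}) ⊗ δ_i. -/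
/-- Catalyst marginal restoration (classical version): tracing out the system factor
(coordinate `0`) of the post-processed joint state
`η = (1/n)[χ ⊗ δ₀ + Σ_{j≠0} P_j(ρ^{⊗(j+1)} ⊗ χ^{(n-j-1)}) ⊗ δ_j]`
returns the catalyst state `ω = (1/n) Σ_j (ρ^{⊗j} ⊗ χ^{(n-j-1)}) ⊗ δ_j`, where
`P_j` swaps coordinates `0` and `j` and `χ^{(k)}` is the marginal of `χ` on its
last `k` coordinates. -/
theorem catalyst_marginal_restoration {X : Type*} [Fintype X] [DecidableEq X]
    (n : ℕ) [NeZero n]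
    (ρ : X → ℝ) (σ : X → ℝ) (χ : (Fin n → X) → ℝ)
    (hρ0 : ∀ a, 0 ≤ ρ a) (hρ1 : ∑ a, ρ a = 1)
    (hσ0 : ∀ a, 0 ≤ σ a) (hσ1 : ∑ a, σ a = 1)
    (hχ0 : ∀ x, 0 ≤ χ x) (hχ1 : ∑ x, χ x = 1) :
    ∀ (j : Fin n) (f : Fin n → X),
      (∑ a : X, (1 / n : ℝ) *
        (if j = 0 then χ (Function.update f 0 a)
         else
           (∏ k : Fin n, if k ≤ j then ρ ((Function.update f 0 a ∘ Equiv.swap 0 j) k) else 1) *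
             (∑ y : Fin n → X,
               if ∀ k, j < k → y k = (Function.update f 0 a ∘ Equiv.swap 0 j) k then χ y
               else 0)))
      = (1 / n : ℝ) * ((∏ k : Fin n, if k ≠ 0 ∧ k ≤ j then ρ (f k) else 1) *
          (∑ y : Fin n → X, if ∀ k, j < k → y k = f k then χ y else 0)) := by
  classical
  intro j f
  by_cases hj : j = 0
  · subst hj
    simp only [if_pos rfl]
    have hprod : (∏ k : Fin n, if k ≠ 0 ∧ k ≤ (0 : Fin n) then ρ (f k) else 1) = 1 := by
      apply Finset.prod_eq_one
      intro k _
      rw [if_neg]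
      rintro ⟨hk0, hk⟩
      exact hk0 (le_antisymm hk (Fin.zero_le k))
    rw [hprod, one_mul, ← Finset.mul_sum]
    congr 1
    rw [← Finset.sum_filter]
    refine Finset.sum_bij' (fun a _ => Function.update f 0 a) (fun y _ => y 0) ?_ ?_ ?_ ?_ ?_
    · intro a _
      simp only [Finset.mem_filter, Finset.mem_univ, true_and]
      intro k hk
      rw [Function.update_apply, if_neg ((Fin.pos_iff_ne_zero' _).mp hk)]
    · intro y _; exact Finset.mem_univ _
    · intro a _; simp
    · intro y hy
      simp only [Finset.mem_filter, Finset.mem_univ, true_and] at hy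
      funext k
      show Function.update f 0 (y 0) k = y k
      by_cases hk : k = 0
      · subst hk; simp
      · rw [Function.update_apply, if_neg hk]
        exact (hy k ((Fin.pos_iff_ne_zero' _).mpr hk)).symm
    · intro a _; rfl
  · simp only [if_neg hj]
    have hS : ∀ a : X,
        (∑ y : Fin n → X,
          if ∀ k, j < k → y k = (Function.update f 0 a ∘ Equiv.swap 0 j) k then χ y else 0)
        = ∑ y : Fin n → X, if ∀ k, j < k → y k = f k then χ y else 0 := by
      intro a
      refine Finset.sum_congr rfl fun y _ => ?_
      refine if_congr ?_ rfl rfl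
      have hpt : ∀ k : Fin n, j < k →
          (Function.update f 0 a ∘ Equiv.swap 0 j) k = f k := by
        intro k hk
        have hk0 : k ≠ 0 := (Fin.pos_iff_ne_zero' _).mp (lt_of_le_of_lt (Fin.zero_le j) hk)
        have hkj : k ≠ j := ne_of_gt hk
        simp [Function.comp, Equiv.swap_apply_of_ne_of_ne hk0 hkj,
          Function.update_apply, hk0]
      constructor
      · intro h k hk; rw [← hpt k hk]; exact h k hk
      · intro h k hk; rw [hpt k hk]; exact h k hk
    have hP : ∀ a : X,
        (∏ k : Fin n, if k ≤ j then ρ ((Function.update f 0 a ∘ Equiv.swap 0 j) k) else 1)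
        = ρ a * ∏ k : Fin n, if k ≠ 0 ∧ k ≤ j then ρ (f k) else 1 := by
      intro a
      have hre : (∏ k : Fin n,
            if k ≤ j then ρ ((Function.update f 0 a ∘ Equiv.swap 0 j) k) else 1)
          = ∏ m : Fin n,
            (if m = 0 then ρ a else 1) * (if m ≠ 0 ∧ m ≤ j then ρ (f m) else 1) := by
        rw [← Equiv.prod_comp (Equiv.swap 0 j)
          (fun k => if k ≤ j then ρ ((Function.update f 0 a ∘ Equiv.swap 0 j) k) else 1)]
        refine Finset.prod_congr rfl fun m _ => ?_
        by_cases hm0 : m = 0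
        · subst hm0
          rw [Function.comp_apply, Equiv.swap_apply_self, Function.update_self,
            if_pos (by rw [Equiv.swap_apply_left] : Equiv.swap (0 : Fin n) j 0 ≤ j)]
          simp
        · by_cases hmj : m = j
          · subst hmj
            simp [Equiv.swap_apply_right, Function.comp, Equiv.swap_apply_self,
              Fin.zero_le, hm0, Function.update_apply, hm0, le_refl]
          · have hsw : Equiv.swap (0 : Fin n) j m = m :=
              Equiv.swap_apply_of_ne_of_ne hm0 hmj
            simp only [hsw, Function.comp, Equiv.swap_apply_self, if_neg hm0,
              Function.update_apply, one_mul]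
            by_cases hmle : m ≤ j
            · rw [if_pos hmle, if_pos ⟨hm0, hmle⟩]
            · rw [if_neg hmle, if_neg (fun h => hmle h.2)]
      rw [hre, Finset.prod_mul_distrib]
      congr 1
      simp
    calc (∑ a : X, (1 / n : ℝ) *
          ((∏ k : Fin n, if k ≤ j then ρ ((Function.update f 0 a ∘ Equiv.swap 0 j) k) else 1) *
            (∑ y : Fin n → X,
              if ∀ k, j < k → y k = (Function.update f 0 a ∘ Equiv.swap 0 j) k then χ y else 0)))
        = ∑ a : X, ρ a * ((1 / n : ℝ) *
            ((∏ k : Fin n, if k ≠ 0 ∧ k ≤ j then ρ (f k) else 1) *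
              (∑ y : Fin n → X, if ∀ k, j < k → y k = f k then χ y else 0))) := by
          refine Finset.sum_congr rfl fun a _ => ?_
          rw [hS a, hP a]; ring
      _ = (∑ a : X, ρ a) * ((1 / n : ℝ) *
            ((∏ k : Fin n, if k ≠ 0 ∧ k ≤ j then ρ (f k) else 1) *
              (∑ y : Fin n → X, if ∀ k, j < k → y k = f k then χ y else 0))) := by
          rw [Finset.sum_mul]
      _ = _ := by rw [hρ1, one_mul]
end

section
/- Majorization is stable under tensoring with a common factor: if p ≺ q for probability vectors p, q on a set of size d, then p⊗r ≺ q⊗r for any probability vector r. -/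
/-!
Split `A ⊆ ι × κ` into its fibers `A_j = {i | (i, j) ∈ A}`. On the fiber over `j` the weight
`p i * r j` is `p` scaled by `r j ≥ 0`, so `p ≺ q` provides `B_j` with `|B_j| = |A_j|` and
`∑_{A_j} p ≤ ∑_{B_j} q`; the set with fibers `B_j` then works for `A`.
-/

namespace Finset

variable {ι κ : Type*} [Fintype ι] [Fintype κ]

def fiberSnd [DecidableEq ι] [DecidableEq κ] (A : Finset (ι × κ)) (j : κ) : Finset ι :=
  {i | (i, j) ∈ A}

def ofFibersSnd [DecidableEq ι] (B : κ → Finset ι) : Finset (ι × κ) :=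
  {z | z.1 ∈ B z.2}

variable [DecidableEq ι] [DecidableEq κ]

@[simp]
theorem fiberSnd_ofFibersSnd (B : κ → Finset ι) (j : κ) : (ofFibersSnd B).fiberSnd j = B j := by
  ext i
  simp [fiberSnd, ofFibersSnd]

theorem sum_eq_sum_sum_fiberSnd {M : Type*} [AddCommMonoid M] (A : Finset (ι × κ))
    (F : ι × κ → M) : ∑ z ∈ A, F z = ∑ j, ∑ i ∈ A.fiberSnd j, F (i, j) := by
  simp only [fiberSnd, sum_filter]
  rw [← Fintype.sum_prod_type_right (f := fun z => if z ∈ A then F z else 0), ← sum_filter,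
    filter_mem_eq_inter, univ_inter]

theorem card_eq_sum_card_fiberSnd (A : Finset (ι × κ)) :
    A.card = ∑ j, (A.fiberSnd j).card := by
  simpa only [sum_const, smul_eq_mul, mul_one] using sum_eq_sum_sum_fiberSnd A fun _ => (1 : ℕ)

end Finset

open Finset in
theorem majorization_tensor_stable_general {ι κ : Type*} [Fintype ι] [Fintype κ]
    (p q : ι → ℝ) (r : κ → ℝ)
    (hr0 : ∀ j, 0 ≤ r j)
    (hmaj : ∀ A : Finset ι, ∃ B : Finset ι,
      B.card = A.card ∧ ∑ i ∈ A, p i ≤ ∑ i ∈ B, q i) :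
    ∀ A : Finset (ι × κ), ∃ B : Finset (ι × κ),
      B.card = A.card ∧ ∑ z ∈ A, p z.1 * r z.2 ≤ ∑ z ∈ B, q z.1 * r z.2 := by
  classical
  intro A
  choose B hcard hsum using fun j => hmaj (A.fiberSnd j)
  refine ⟨ofFibersSnd B, ?_, ?_⟩
  · simp only [card_eq_sum_card_fiberSnd A, card_eq_sum_card_fiberSnd (ofFibersSnd B),
      fiberSnd_ofFibersSnd, hcard]
  · simp only [sum_eq_sum_sum_fiberSnd A, sum_eq_sum_sum_fiberSnd (ofFibersSnd B),
      fiberSnd_ofFibersSnd, ← sum_mul]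
    gcongr with j
    · exact hr0 j
    · exact hsum j

/-- Majorization is stable under tensoring with a common factor:
if `p ≺ q` then `p ⊗ r ≺ q ⊗ r`. -/
theorem majorization_tensor_stable {ι κ : Type*} [Fintype ι] [Fintype κ]
    (p q : ι → ℝ) (r : κ → ℝ)
    (hp0 : ∀ i, 0 ≤ p i) (hp1 : ∑ i, p i = 1)
    (hq0 : ∀ i, 0 ≤ q i) (hq1 : ∑ i, q i = 1)
    (hr0 : ∀ j, 0 ≤ r j) (hr1 : ∑ j, r j = 1)
    (hmaj : ∀ A : Finset ι, ∃ B : Finset ι,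
      B.card = A.card ∧ ∑ i ∈ A, p i ≤ ∑ i ∈ B, q i) :
    ∀ A : Finset (ι × κ), ∃ B : Finset (ι × κ),
      B.card = A.card ∧ ∑ z ∈ A, p z.1 * r z.2 ≤ ∑ z ∈ B, q z.1 * r z.2 :=
  majorization_tensor_stable_general p q r hr0 hmaj
end
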